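/- arXiv:2512.02467 — 6 statements merged into one kernel-verified Lean document; each statement's English description precedes it below -/
import Mathlib

section
/- If k0, k1 are positive and min(k0^2, k1^2 - k0) > k̄ for some k̄ ≥ 0, then with A = [[0,1],[-k0,-k1]] and P = [[2 k0 k1, k0],[k0, k1]], the matrix P·A + Aᵀ·P + 2 k̄ I₂ is negative definite. -/
/-! `P` decouples the coordinates: `P A + Aᵀ P` is diagonal, so the matrix in question is the
diagonal matrix `2 diag(k₀² - k̄, k₁² - k₀ - k̄)`, positive definite by the hypotheses. -/

open Matrix

theorem companion_lyapunov_eq_diagonal (k0 k1 : ℝ) :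
    let A : Matrix (Fin 2) (Fin 2) ℝ := !![0, 1; -k0, -k1]
    let P : Matrix (Fin 2) (Fin 2) ℝ := !![2 * k0 * k1, k0; k0, k1]
    P * A + Aᵀ * P = diagonal ![-2 * k0 ^ 2, -2 * (k1 ^ 2 - k0)] := by
  ext i j
  fin_cases i <;> fin_cases j <;> simp [mul_apply, Fin.sum_univ_two] <;> ring

theorem stmt_2_general (k0 k1 kbar : ℝ)
    (h1 : k0 ^ 2 > kbar) (h2 : k1 ^ 2 - k0 > kbar) :
    let A : Matrix (Fin 2) (Fin 2) ℝ := !![0, 1; -k0, -k1]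
    let P : Matrix (Fin 2) (Fin 2) ℝ := !![2 * k0 * k1, k0; k0, k1]
    (-(P * A + Aᵀ * P + (2 * kbar) • (1 : Matrix (Fin 2) (Fin 2) ℝ))).PosDef := by
  intro A P
  have h_diag : -(P * A + Aᵀ * P + (2 * kbar) • (1 : Matrix (Fin 2) (Fin 2) ℝ)) =
      diagonal ![2 * (k0 ^ 2 - kbar), 2 * (k1 ^ 2 - k0 - kbar)] := by
    rw [companion_lyapunov_eq_diagonal, smul_one_eq_diagonal, diagonal_add, diagonal_neg]
    congr 1
    ext i
    fin_cases i <;> simp <;> ring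
  rw [h_diag, posDef_diagonal_iff]
  intro i
  fin_cases i <;> simp <;> linarith

theorem stmt_2 (k0 k1 kbar : ℝ) (hk0 : 0 < k0) (hk1 : 0 < k1) (hkbar : 0 ≤ kbar)
    (h1 : k0 ^ 2 > kbar) (h2 : k1 ^ 2 - k0 > kbar) :
    let A : Matrix (Fin 2) (Fin 2) ℝ := !![0, 1; -k0, -k1]
    let P : Matrix (Fin 2) (Fin 2) ℝ := !![2 * k0 * k1, k0; k0, k1]
    (-(P * A + Aᵀ * P + (2 * kbar) • (1 : Matrix (Fin 2) (Fin 2) ℝ))).PosDef :=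
  stmt_2_general k0 k1 kbar h1 h2
end

section
/- If k0, k1, k2 are positive reals with k1^2 > 2 k0 k2 and k2^2 > k1, then the 3×3 symmetric matrix P with rows [2k0k1, 2k0k2, k0], [2k0k2, 2k1k2 - k0, k1], [k0, k1, k2] is positive definite. -/
/-!
Sylvester's criterion with the trailing principal minors: for the symmetric matrix with rows
`(a, b, c), (b, d, e), (c, e, f)`, completing the square twice writes `f (d f - e²)` times its
quadratic form as a sum of three squares weighted by `d f - e²`, `1` and `f det`. Here the minors
are `k2`, `2 k1 k2² - k0 k2 - k1²` and `k0 (4 k1² k2² - 2 k1³ - 4 k0 k2³ + k0²)`, all positive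
since `k2² > k1` and `k1² > 2 k0 k2`.
-/

open Matrix

lemma Matrix.det_fin_three_of_symm (a b c d e f : ℝ) :
    (!![a, b, c; b, d, e; c, e, f] : Matrix (Fin 3) (Fin 3) ℝ).det =
      a * (d * f - e ^ 2) - b * (b * f - c * e) + c * (b * e - c * d) := by
  simp only [det_fin_three, of_apply, cons_val', cons_val_zero, cons_val_one, cons_val_two,
    empty_val', cons_val_fin_one, tail_cons, vecHead]
  ring

lemma quadratic_fin_three_pos {a b c d e f x y z : ℝ} (hf : 0 < f) (hm : 0 < d * f - e ^ 2)
    (hdet : 0 < a * (d * f - e ^ 2) - b * (b * f - c * e) + c * (b * e - c * d))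
    (hxyz : x ≠ 0 ∨ y ≠ 0 ∨ z ≠ 0) :
    0 < a * x ^ 2 + d * y ^ 2 + f * z ^ 2 + 2 * b * x * y + 2 * c * x * z + 2 * e * y * z := by
  set m := d * f - e ^ 2
  set Δ := a * m - b * (b * f - c * e) + c * (b * e - c * d)
  have key : f * m * (a * x ^ 2 + d * y ^ 2 + f * z ^ 2 + 2 * b * x * y + 2 * c * x * z
      + 2 * e * y * z) = m * (c * x + e * y + f * z) ^ 2 + ((b * f - c * e) * x + m * y) ^ 2
      + f * Δ * x ^ 2 := by
    simp only [m, Δ]; ring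
  refine (mul_pos_iff_of_pos_left (mul_pos hf hm)).mp (key ▸ ?_)
  by_cases hx : x = 0
  · subst hx
    by_cases hy : y = 0
    · subst hy
      have hz : z ≠ 0 := by simpa using hxyz
      have := mul_pos (mul_pos hm (pow_pos hf 2)) (pow_two_pos_of_ne_zero hz)
      nlinarith
    · have := mul_pos (pow_pos hm 2) (pow_two_pos_of_ne_zero hy)
      nlinarith [sq_nonneg (e * y + f * z)]
  · have := mul_pos (mul_pos hf hdet) (pow_two_pos_of_ne_zero hx)
    positivity

theorem Matrix.posDef_fin_three_of_minors_pos {a b c d e f : ℝ} (hf : 0 < f)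
    (hm : 0 < d * f - e ^ 2)
    (hdet : 0 < (!![a, b, c; b, d, e; c, e, f] : Matrix (Fin 3) (Fin 3) ℝ).det) :
    (!![a, b, c; b, d, e; c, e, f] : Matrix (Fin 3) (Fin 3) ℝ).PosDef := by
  rw [det_fin_three_of_symm] at hdet
  refine .of_dotProduct_mulVec_pos ?_ fun v hv => ?_
  · ext i j
    fin_cases i <;> fin_cases j <;> rfl
  · have hv : v 0 ≠ 0 ∨ v 1 ≠ 0 ∨ v 2 ≠ 0 := by
      contrapose! hv
      ext i
      fin_cases i <;> simp [hv]
    refine (quadratic_fin_three_pos hf hm hdet hv).trans_eq ?_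
    simp only [dotProduct, Pi.star_apply, star_trivial, mulVec, of_apply, cons_val',
      cons_val_fin_one, Fin.sum_univ_three, cons_val_zero, cons_val_one, cons_val]
    ring

theorem stmt_6 (k0 k1 k2 : ℝ) (hk0 : 0 < k0) (hk1 : 0 < k1) (hk2 : 0 < k2)
    (h1 : k1 ^ 2 > 2 * k0 * k2) (h2 : k2 ^ 2 > k1) :
    (!![2 * k0 * k1, 2 * k0 * k2, k0;
        2 * k0 * k2, 2 * k1 * k2 - k0, k1;
        k0, k1, k2] : Matrix (Fin 3) (Fin 3) ℝ).PosDef := by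
  refine posDef_fin_three_of_minors_pos hk2 ?_ ?_
  · nlinarith [mul_lt_mul_of_pos_left h2 hk1]
  · have hD : 0 < 4 * k1 ^ 2 * k2 ^ 2 - 2 * k1 ^ 3 - 4 * k0 * k2 ^ 3 + k0 ^ 2 := by
      nlinarith [mul_lt_mul_of_pos_left h2 (pow_pos hk1 2),
        mul_lt_mul_of_pos_left h1 (pow_pos hk2 2), pow_pos hk0 2]
    rw [det_fin_three_of_symm]
    linarith [mul_pos hk0 hD]
end

section
/- If k0, k1, k2, k3 are positive reals satisfying k1^2 > 2 k0 k2, k2^2 > 2 k1 k3, and k3^2 > k2, then the polynomial s^4 + k3 s^3 + k2 s^2 + k1 s + k0 is Hurwitz stable: every complex root has negative real part. -/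
/-!
Suppose `s = x + iy` is a root with `x ≥ 0`. If `y = 0` the quartic is positive at `x`. Otherwise
the imaginary part of the equation, divided by `y`, is linear in `u = y²`; eliminating `u` from
the real part leaves a sextic equation in `x` whose coefficients are all positive once the
Hurwitz determinant `k₁k₂k₃ - k₁² - k₀k₃²` is, so it has no root `x ≥ 0`. The three inequalities
on the `kᵢ` make the Hurwitz determinant positive.
-/

section Quartic

variable {k0 k1 k2 k3 : ℝ}

theorem quartic_eq_zero_iff_re_im (s : ℂ) :
    s ^ 4 + (k3 : ℂ) * s ^ 3 + (k2 : ℂ) * s ^ 2 + (k1 : ℂ) * s + (k0 : ℂ) = 0 ↔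
      s.re ^ 4 - 6 * s.re ^ 2 * s.im ^ 2 + s.im ^ 4 + k3 * (s.re ^ 3 - 3 * s.re * s.im ^ 2)
          + k2 * (s.re ^ 2 - s.im ^ 2) + k1 * s.re + k0 = 0 ∧
        s.im * (4 * s.re ^ 3 - 4 * s.re * s.im ^ 2 + 3 * k3 * s.re ^ 2 - k3 * s.im ^ 2
          + 2 * k2 * s.re + k1) = 0 := by
  have hre : (s ^ 4 + (k3 : ℂ) * s ^ 3 + (k2 : ℂ) * s ^ 2 + (k1 : ℂ) * s + (k0 : ℂ)).re =
      s.re ^ 4 - 6 * s.re ^ 2 * s.im ^ 2 + s.im ^ 4 + k3 * (s.re ^ 3 - 3 * s.re * s.im ^ 2)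
        + k2 * (s.re ^ 2 - s.im ^ 2) + k1 * s.re + k0 := by
    simp [pow_succ]; ring
  have him : (s ^ 4 + (k3 : ℂ) * s ^ 3 + (k2 : ℂ) * s ^ 2 + (k1 : ℂ) * s + (k0 : ℂ)).im =
      s.im * (4 * s.re ^ 3 - 4 * s.re * s.im ^ 2 + 3 * k3 * s.re ^ 2 - k3 * s.im ^ 2
        + 2 * k2 * s.re + k1) := by
    simp [pow_succ]; ring
  rw [Complex.ext_iff, hre, him, Complex.zero_re, Complex.zero_im]

def hurwitzDet (k0 k1 k2 k3 : ℝ) : ℝ := k1 * k2 * k3 - k1 ^ 2 - k0 * k3 ^ 2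

theorem hurwitzDet_pos_of_sq_gt (hk1 : 0 < k1) (hk2 : 0 < k2) (hk3 : 0 < k3)
    (h1 : k1 ^ 2 > 2 * k0 * k2) (h2 : k2 ^ 2 > 2 * k1 * k3) (h3 : k3 ^ 2 > k2) :
    0 < hurwitzDet k0 k1 k2 k3 := by
  -- 2k₂Δ > k₁(2k₂²k₃ - 2k₁k₂ - k₁k₃²) > k₁²(3k₃² - 2k₂) > 0
  have e1 : 2 * k0 * k2 * k3 ^ 2 < k1 ^ 2 * k3 ^ 2 := by gcongr
  have e2 : 2 * k1 * k3 * (2 * k1 * k3) < 2 * k1 * k3 * k2 ^ 2 := by gcongr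
  have e3 : k1 ^ 2 * k2 < k1 ^ 2 * k3 ^ 2 := by gcongr
  have : 0 < 2 * k2 * hurwitzDet k0 k1 k2 k3 := by
    unfold hurwitzDet; linarith [mul_pos (pow_pos hk1 2) hk2]
  exact pos_of_mul_pos_right this (by positivity)

theorem hurwitz_cross_term_pos (hk1 : 0 ≤ k1) (hk3 : 0 < k3) (hΔ : 0 < hurwitzDet k0 k1 k2 k3) :
    0 < k1 * k3 + k2 ^ 2 - 4 * k0 := by
  have key : k3 ^ 2 * (k1 * k3 + k2 ^ 2 - 4 * k0)
      = k1 * k3 ^ 3 + (k2 * k3 - 2 * k1) ^ 2 + 4 * hurwitzDet k0 k1 k2 k3 := by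
    unfold hurwitzDet; ring
  have : 0 < k3 ^ 2 * (k1 * k3 + k2 ^ 2 - 4 * k0) := by rw [key]; positivity
  exact pos_of_mul_pos_right this (by positivity)

/-- `-(4x + k₃)²` times the real part of the quartic at `x + iy`, once `u = y²` is eliminated
through the imaginary part divided by `y`. -/
def hurwitzSextic (k0 k1 k2 k3 x : ℝ) : ℝ :=
  hurwitzDet k0 k1 k2 k3 + 2 * k3 * (k1 * k3 + k2 ^ 2 - 4 * k0) * x
    + 4 * (2 * k2 * k3 ^ 2 + (k1 * k3 + k2 ^ 2 - 4 * k0)) * x ^ 2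
    + 8 * k3 * (k3 ^ 2 + 4 * k2) * x ^ 3 + 16 * (3 * k3 ^ 2 + 2 * k2) * x ^ 4
    + 96 * k3 * x ^ 5 + 64 * x ^ 6

theorem hurwitzSextic_eq_zero {x u : ℝ}
    (hre : x ^ 4 - 6 * x ^ 2 * u + u ^ 2 + k3 * (x ^ 3 - 3 * x * u) + k2 * (x ^ 2 - u)
      + k1 * x + k0 = 0)
    (him : u * (4 * x + k3) = 4 * x ^ 3 + 3 * k3 * x ^ 2 + 2 * k2 * x + k1) :
    hurwitzSextic k0 k1 k2 k3 x = 0 := by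
  unfold hurwitzSextic hurwitzDet
  linear_combination -(4 * x + k3) ^ 2 * hre
    + (u * (4 * x + k3) + 4 * x ^ 3 + 3 * k3 * x ^ 2 + 2 * k2 * x + k1
      - (6 * x ^ 2 + 3 * k3 * x + k2) * (4 * x + k3)) * him

theorem hurwitzSextic_pos (hk1 : 0 ≤ k1) (hk2 : 0 ≤ k2) (hk3 : 0 < k3)
    (hΔ : 0 < hurwitzDet k0 k1 k2 k3) {x : ℝ} (hx : 0 ≤ x) : 0 < hurwitzSextic k0 k1 k2 k3 x := by
  have hc := (hurwitz_cross_term_pos hk1 hk3 hΔ).le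
  unfold hurwitzSextic
  positivity

theorem re_neg_of_quartic_eq_zero_of_hurwitzDet_pos (hk0 : 0 < k0) (hk1 : 0 ≤ k1) (hk2 : 0 ≤ k2)
    (hk3 : 0 < k3) (hΔ : 0 < hurwitzDet k0 k1 k2 k3) {s : ℂ}
    (hs : s ^ 4 + (k3 : ℂ) * s ^ 3 + (k2 : ℂ) * s ^ 2 + (k1 : ℂ) * s + (k0 : ℂ) = 0) :
    s.re < 0 := by
  by_contra! hx
  obtain ⟨hre, him⟩ := (quartic_eq_zero_iff_re_im s).mp hs
  rcases mul_eq_zero.mp him with hy | hred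
  · have : 0 < s.re ^ 4 + k3 * s.re ^ 3 + k2 * s.re ^ 2 + k1 * s.re + k0 := by positivity
    rw [hy] at hre
    linarith
  · refine (hurwitzSextic_pos hk1 hk2 hk3 hΔ hx).ne' ?_
    exact hurwitzSextic_eq_zero (u := s.im ^ 2) (by linear_combination hre)
      (by linear_combination -hred)

end Quartic

theorem stmt_8 (k0 k1 k2 k3 : ℝ) (hk0 : 0 < k0) (hk1 : 0 < k1) (hk2 : 0 < k2) (hk3 : 0 < k3)
    (h1 : k1 ^ 2 > 2 * k0 * k2) (h2 : k2 ^ 2 > 2 * k1 * k3) (h3 : k3 ^ 2 > k2) :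
    ∀ s : ℂ, s ^ 4 + (k3 : ℂ) * s ^ 3 + (k2 : ℂ) * s ^ 2 + (k1 : ℂ) * s + (k0 : ℂ) = 0 →
      s.re < 0 := fun _ hs =>
  re_neg_of_quartic_eq_zero_of_hurwitzDet_pos hk0 hk1.le hk2.le hk3
    (hurwitzDet_pos_of_sq_gt hk1 hk2 hk3 h1 h2 h3) hs
end

section
/- Suppose positive reals k0,…,kn satisfy k_{i-1}^2 > 2 k_{i-2} k_i for 2 ≤ i ≤ n. Then for all 1 ≤ i ≤ j ≤ n-1, one has k_i k_j > 2^{j-i+1} k_{i-1} k_{j+1}; in particular k_i k_j > k_{i-1} k_{j+1}. -/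
/-!
Multiplying the inequalities `c * a m * a (m + 2) < a (m + 1) ^ 2` for `i ≤ m ≤ j` telescopes:
the product of the ratios `a (m + 1) ^ 2 / (a m * a (m + 2))` equals
`a (i + 1) * a (j + 1) / (a i * a (j + 2))`, and each ratio exceeds `c`.
-/

theorem pow_mul_lt_mul_of_sq_gt {a : ℕ → ℝ} {c : ℝ} (hc : 0 ≤ c) {i j : ℕ} (hij : i ≤ j)
    (hpos : ∀ m, i ≤ m → m ≤ j + 2 → 0 < a m)
    (hsq : ∀ m, i ≤ m → m ≤ j → c * a m * a (m + 2) < a (m + 1) ^ 2) :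
    c ^ (j - i + 1) * (a i * a (j + 2)) < a (i + 1) * a (j + 1) := by
  induction j, hij using Nat.le_induction with
  | base =>
    simpa [mul_assoc, sq] using hsq i le_rfl le_rfl
  | succ j hij ih =>
    have ih := ih (fun m hm hmj => hpos m hm (by omega)) (fun m hm hmj => hsq m hm (by omega))
    have hstep := hsq (j + 1) (by omega) le_rfl
    have hai := hpos i le_rfl (by omega)
    have ha1 := hpos (j + 1) (by omega) (by omega)
    have ha2 := hpos (j + 2) (by omega) (by omega)
    have ha3 := hpos (j + 3) (by omega) (by omega)
    have hprod : c ^ (j - i + 1) * (a i * a (j + 2)) * (c * a (j + 1) * a (j + 3))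
        < a (i + 1) * a (j + 1) * a (j + 2) ^ 2 :=
      mul_lt_mul'' ih hstep (by positivity) (by positivity)
    rw [show j + 1 - i + 1 = j - i + 1 + 1 by omega, pow_succ]
    have hpos' : 0 < a (j + 1) * a (j + 2) := mul_pos ha1 ha2
    refine lt_of_mul_lt_mul_right ?_ hpos'.le
    calc c ^ (j - i + 1) * c * (a i * a (j + 1 + 2)) * (a (j + 1) * a (j + 2))
        = c ^ (j - i + 1) * (a i * a (j + 2)) * (c * a (j + 1) * a (j + 3)) := by ring
      _ < a (i + 1) * a (j + 1) * a (j + 2) ^ 2 := hprod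
      _ = a (i + 1) * a (j + 1 + 1) * (a (j + 1) * a (j + 2)) := by ring

theorem stmt_10_general (n : ℕ) (k : ℕ → ℝ) (hpos : ∀ i ≤ n, 0 < k i)
    (hk : ∀ i, 2 ≤ i → i ≤ n → k (i - 1) ^ 2 > 2 * k (i - 2) * k i) :
    ∀ i j, 1 ≤ i → i ≤ j → j ≤ n - 1 →
      k i * k j > 2 ^ (j - i + 1) * (k (i - 1) * k (j + 1)) ∧
      k i * k j > k (i - 1) * k (j + 1) := by
  rintro (_ | i) (_ | j) hi hij hj
  · omega
  · omega
  · omega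
  have hij : i ≤ j := by omega
  have hmain : 2 ^ (j - i + 1) * (k i * k (j + 2)) < k (i + 1) * k (j + 1) :=
    pow_mul_lt_mul_of_sq_gt zero_le_two hij (fun m _ hm => hpos m (by omega))
      fun m _ hm => by simpa using hk (m + 2) (by omega) (by omega)
  have hprod : 0 < k i * k (j + 2) := mul_pos (hpos i (by omega)) (hpos (j + 2) (by omega))
  simp only [Nat.add_sub_cancel, Nat.add_sub_add_right]
  refine ⟨hmain, lt_of_le_of_lt ?_ hmain⟩
  exact le_mul_of_one_le_left hprod.le (one_le_pow₀ one_le_two)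

theorem stmt_10 (n : ℕ) (hn : 2 ≤ n) (k : ℕ → ℝ) (hpos : ∀ i ≤ n, 0 < k i)
    (hk : ∀ i, 2 ≤ i → i ≤ n → k (i - 1) ^ 2 > 2 * k (i - 2) * k i) :
    ∀ i j, 1 ≤ i → i ≤ j → j ≤ n - 1 →
      k i * k j > 2 ^ (j - i + 1) * (k (i - 1) * k (j + 1)) ∧
      k i * k j > k (i - 1) * k (j + 1) :=
  stmt_10_general n k hpos hk
end

section
/- Suppose positive reals k0,…,kn satisfy k_j^2 > 2 k_{j-1} k_{j+1} for 1 ≤ j ≤ n-1 and k_n^2 > k_{n-1}. Then for every 0 ≤ i ≤ n-1, one has k_{i+1} k_n > k_i. -/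
/-! Downward induction on `i`, starting from `k (n-1) < k n ^ 2`. With `t = k n`, the inductive
hypothesis `k (i+1) < k (i+2) * t` and log-concavity `k i * k (i+2) ≤ k (i+1) ^ 2` give
`k i * k (i+1) < k i * k (i+2) * t ≤ k (i+1) ^ 2 * t`, and dividing by `k (i+1)` yields `k i < k (i+1) * t`. -/

lemma lt_mul_of_mul_le_sq {a b c t : ℝ} (ha : 0 < a) (hb : 0 < b) (ht : 0 < t)
    (habc : a * c ≤ b ^ 2) (hbc : b < c * t) : a < b * t := by
  have : a * b < b * (b * t) := by nlinarith [mul_le_mul_of_nonneg_right habc ht.le]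
  nlinarith

theorem lt_succ_mul_of_log_concave {x : ℕ → ℝ} {t : ℝ} {N : ℕ} (ht : 0 < t)
    (hpos : ∀ i ≤ N, 0 < x i) (hlc : ∀ i < N, x i * x (i + 2) ≤ x (i + 1) ^ 2)
    (htop : x N < x (N + 1) * t) : ∀ i ≤ N, x i < x (i + 1) * t := by
  intro i hi
  induction hi using Nat.decreasingInduction with
  | self => exact htop
  | of_succ i hiN ih =>
    exact lt_mul_of_mul_le_sq (hpos i hiN.le) (hpos (i + 1) hiN) ht (hlc i hiN) ih

theorem stmt_11 (n : ℕ) (hn : 2 ≤ n) (k : ℕ → ℝ) (hpos : ∀ i ≤ n, 0 < k i)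
    (hk : ∀ j, 1 ≤ j → j ≤ n - 1 → k j ^ 2 > 2 * k (j - 1) * k (j + 1))
    (hkn : k n ^ 2 > k (n - 1)) :
    ∀ i ≤ n - 1, k (i + 1) * k n > k i := by
  have hn1 : n - 1 + 1 = n := by omega
  have hlc : ∀ i < n - 1, k i * k (i + 2) ≤ k (i + 1) ^ 2 := by
    intro i hi
    have h := hk (i + 1) (by omega) (by omega)
    have := mul_pos (hpos i (by omega)) (hpos (i + 2) (by omega))
    rw [Nat.add_sub_cancel] at h
    linarith
  have htop : k (n - 1) < k (n - 1 + 1) * k n := by rw [hn1, ← sq]; exact hkn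
  exact lt_succ_mul_of_log_concave (hpos n le_rfl) (fun i hi => hpos i (by omega)) hlc htop
end

section
/- Define p_{ij} recursively by p_{0j} = 2 k0 k_{j+1} for 0≤j≤n-1, p_{0n}=k0, p_{ij} = 2 k_i k_{j+1} - p_{i-1,j+1} for i≤j≤n-1, p_{in}=k_i. If the positive reals k0,…,kn satisfy k_j^2 > 2 k_{j-1} k_{j+1} (1≤j≤n-1) and k_n^2 > k_{n-1}, then 0 ≤ p_{ij} ≤ 2 k_i k_{j+1} for all 0 ≤ i ≤ j ≤ n-1. -/
/-!
The hypotheses make `k` log-concave, so the ratio `k (j + 1) / k j` decreases; in particular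
`k i * k (j + 2) ≤ k (i + 1) * k (j + 1)` for `i ≤ j + 1`. Induct on the row `i`: in the
recursion `p (i + 1) j = 2 k (i + 1) k (j + 1) - p i (j + 1)` the subtracted term lies in
`[0, 2 k i k (j + 2)] ⊆ [0, 2 k (i + 1) k (j + 1)]`, except in the last column, where
`p i n = k i < k (i + 1) k n` by `k (n - 1) < k n ^ 2`.
-/

theorem mul_succ_le_succ_mul_of_sq {k : ℕ → ℝ} {n : ℕ} (hpos : ∀ i ≤ n, 0 < k i)
    (hlc : ∀ j, j + 2 ≤ n → k j * k (j + 2) ≤ k (j + 1) ^ 2) {a b : ℕ} (hab : a ≤ b)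
    (hb : b + 1 ≤ n) : k a * k (b + 1) ≤ k (a + 1) * k b := by
  induction b, hab using Nat.le_induction with
  | base => rw [mul_comm]
  | succ b _ ih =>
    have hkb := hpos b (by omega)
    have hkb1 := hpos (b + 1) (by omega)
    have hprod : k a * k (b + 2) * (k b * k (b + 1)) ≤ k (a + 1) * k (b + 1) * (k b * k (b + 1)) :=
      calc k a * k (b + 2) * (k b * k (b + 1))
          = k a * k (b + 1) * (k b * k (b + 2)) := by ring
        _ ≤ k (a + 1) * k b * k (b + 1) ^ 2 :=
          mul_le_mul (ih (by omega)) (hlc b hb) (mul_pos hkb (hpos (b + 2) hb)).le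
            (mul_pos (hpos (a + 1) (by omega)) hkb).le
        _ = k (a + 1) * k (b + 1) * (k b * k (b + 1)) := by ring
    exact le_of_mul_le_mul_right hprod (by positivity)

theorem lt_mul_last_of_sq {k : ℕ → ℝ} {n : ℕ} (hpos : ∀ i ≤ n, 0 < k i)
    (hlc : ∀ j, j + 2 ≤ n → k j * k (j + 2) ≤ k (j + 1) ^ 2) (hkn : k (n - 1) < k n ^ 2)
    {i : ℕ} (hi : i + 1 ≤ n) : k i < k (i + 1) * k n := by
  obtain ⟨m, rfl⟩ : ∃ m, n = m + 1 := ⟨n - 1, by omega⟩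
  have hkn' : k m < k (m + 1) ^ 2 := by simpa using hkn
  have hratio := mul_succ_le_succ_mul_of_sq hpos hlc (a := i) (b := m) (by omega) le_rfl
  have hki1 := hpos (i + 1) hi
  have hklast := hpos (m + 1) le_rfl
  have hprod : k i * k (m + 1) < k (i + 1) * k (m + 1) * k (m + 1) :=
    calc k i * k (m + 1) ≤ k (i + 1) * k m := hratio
      _ < k (i + 1) * k (m + 1) ^ 2 := mul_lt_mul_of_pos_left hkn' hki1
      _ = k (i + 1) * k (m + 1) * k (m + 1) := by ring
  exact lt_of_mul_lt_mul_right hprod hklast.le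

theorem stmt_12 (n : ℕ) (hn : 2 ≤ n) (k : ℕ → ℝ) (hpos : ∀ i ≤ n, 0 < k i)
    (hk : ∀ j, 1 ≤ j → j ≤ n - 1 → k j ^ 2 > 2 * k (j - 1) * k (j + 1))
    (hkn : k n ^ 2 > k (n - 1))
    (p : ℕ → ℕ → ℝ)
    (hp0 : ∀ j ≤ n - 1, p 0 j = 2 * k 0 * k (j + 1))
    (hp0n : p 0 n = k 0)
    (hpi : ∀ i j, 1 ≤ i → i ≤ j → j ≤ n - 1 → p i j = 2 * k i * k (j + 1) - p (i - 1) (j + 1))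
    (hpin : ∀ i, 1 ≤ i → i ≤ n → p i n = k i) :
    ∀ i j, i ≤ j → j ≤ n - 1 → 0 ≤ p i j ∧ p i j ≤ 2 * k i * k (j + 1) := by
  have hlc : ∀ j, j + 2 ≤ n → k j * k (j + 2) ≤ k (j + 1) ^ 2 := fun j hj => by
    have h := hk (j + 1) (by omega) (by omega)
    simp only [Nat.add_sub_cancel] at h
    nlinarith [hpos j (by omega), hpos (j + 2) hj]
  have hlast : ∀ i ≤ n, p i n = k i := fun i hi => by
    rcases Nat.eq_zero_or_pos i with rfl | hi0
    exacts [hp0n, hpin i hi0 hi]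
  intro i
  induction i with
  | zero =>
    intro j _ hj
    rw [hp0 j hj]
    exact ⟨by nlinarith [hpos 0 (by omega), hpos (j + 1) (by omega)], le_rfl⟩
  | succ i ih =>
    intro j hij hj
    have hki := hpos i (by omega)
    have hki1 := hpos (i + 1) (by omega)
    have hkj1 := hpos (j + 1) (by omega)
    have hsub : 0 ≤ p i (j + 1) ∧ p i (j + 1) ≤ 2 * k (i + 1) * k (j + 1) := by
      rcases Nat.lt_or_ge (j + 1) n with hlt | hge
      · obtain ⟨h0, h1⟩ := ih (j + 1) (by omega) (by omega)
        have := mul_succ_le_succ_mul_of_sq hpos hlc (a := i) (b := j + 1) (by omega) (by omega)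
        exact ⟨h0, by linarith⟩
      · obtain rfl : n = j + 1 := by omega
        have := lt_mul_last_of_sq hpos hlc hkn (i := i) (by omega)
        rw [hlast i (by omega)]
        exact ⟨hki.le, by nlinarith⟩
    rw [hpi (i + 1) j (by omega) hij hj, Nat.add_sub_cancel]
    constructor <;> linarith
end
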